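/- The classic round-robin mechanism with additive valuations produces an envy-free up to one item (EF1) allocation: if agents pick items one at a time in a fixed cyclic order, each selecting a most-valued remaining item, then for every pair of agents i and j, either i does not envy j, or j's bundle contains an item whose removal eliminates i's envy. -/

import Mathlib

/-!
Charge each good that agent `j` picks after its first pick to the good agent `i` picked in the
preceding round: step `t = q n + j` (with `q ≥ 1`) is matched with step `t - n - j + i`, which
belongs to `i` and comes no later than `t`. By greediness `i` values its own good at least as
much as `j`'s, and the matching is injective, so `i`'s bundle is worth at least `j`'s bundle
without `j`'s first pick.
-/

open Finset

theorem Finset.sum_le_sum_of_injOn {ι κ M : Type*} [AddCommMonoid M] [PartialOrder M]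
    [IsOrderedAddMonoid M] {s : Finset ι} {t : Finset κ} {f : ι → M} {g : κ → M} (e : ι → κ)
    (he : Set.InjOn e s) (hest : Set.MapsTo e s t) (hg : ∀ j ∈ t, 0 ≤ g j)
    (h : ∀ i ∈ s, f i ≤ g (e i)) : ∑ i ∈ s, f i ≤ ∑ j ∈ t, g j := by
  classical
  calc ∑ i ∈ s, f i ≤ ∑ i ∈ s, g (e i) := sum_le_sum h
    _ = ∑ j ∈ s.image e, g j := (sum_image he).symm
    _ ≤ ∑ j ∈ t, g j :=
      sum_le_sum_of_subset_of_nonneg (image_subset_iff.2 hest) fun j hj _ ↦ hg j hj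

namespace RoundRobin

variable {n m : ℕ}

def turns (n : ℕ) (i : Fin n) : Finset (Fin m) :=
  univ.filter fun t : Fin m ↦ (t : ℕ) % n = i

theorem mem_turns {i : Fin n} {t : Fin m} : t ∈ turns n i ↔ (t : ℕ) % n = i := by
  simp [turns]

theorem add_le_of_mem_turns {j : Fin n} {t : Fin m} (ht : t ∈ turns n j) (htj : (t : ℕ) ≠ j) :
    n + j ≤ t := by
  have hdiv := Nat.div_add_mod (t : ℕ) n
  rw [mem_turns.1 ht] at hdiv
  rcases Nat.eq_zero_or_pos ((t : ℕ) / n) with h0 | hpos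
  · rw [h0, Nat.mul_zero, Nat.zero_add] at hdiv
    exact absurd hdiv.symm htj
  · have := Nat.le_mul_of_pos_right n hpos
    omega

def prevTurn (i j : Fin n) (t : Fin m) : Fin m :=
  ⟨t + i - (n + j), by have := i.2; have := t.2; omega⟩

theorem prevTurn_le (i j : Fin n) (t : Fin m) : prevTurn i j t ≤ t := by
  have := i.2
  simp only [Fin.le_def, prevTurn]
  omega

theorem prevTurn_mem_turns (i : Fin n) {j : Fin n} {t : Fin m} (ht : t ∈ turns n j)
    (htj : (t : ℕ) ≠ j) : prevTurn i j t ∈ turns n i := by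
  have hle := add_le_of_mem_turns ht htj
  have hdiv := Nat.div_add_mod (t : ℕ) n
  rw [mem_turns.1 ht] at hdiv
  have hval : (prevTurn i j t : ℕ) = i + n * ((t : ℕ) / n - 1) := by
    simp only [prevTurn, Nat.mul_sub_one]
    omega
  rw [mem_turns, hval, Nat.add_mul_mod_self_left, Nat.mod_eq_of_lt i.2]

theorem prevTurn_injOn (i j : Fin n) :
    Set.InjOn (prevTurn (m := m) i j) {t | n + j ≤ (t : ℕ)} := by
  intro t ht t' ht' h
  have h' := congrArg Fin.val h
  simp only [Set.mem_ofPred_eq, prevTurn] at ht ht' h'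
  omega

theorem sum_erase_first_turn_le {i j : Fin n} (w : Fin m → ℝ) (hw : ∀ t, 0 ≤ w t)
    (hgreedy : ∀ t t', t ≤ t' → t ∈ turns n i → w t' ≤ w t) {t₀ : Fin m} (ht₀ : (t₀ : ℕ) = j) :
    ∑ t ∈ (turns n j).erase t₀, w t ≤ ∑ t ∈ turns n i, w t := by
  have hne : ∀ t ∈ (turns n j).erase t₀, (t : ℕ) ≠ j := fun t ht h ↦
    (mem_erase.1 ht).1 (Fin.ext (h.trans ht₀.symm))
  refine sum_le_sum_of_injOn (prevTurn i j) (fun t ht t' ht' ↦ prevTurn_injOn i j ?_ ?_)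
    (fun t ht ↦ prevTurn_mem_turns i (mem_of_mem_erase ht) (hne t ht)) (fun t _ ↦ hw t)
    (fun t ht ↦ hgreedy _ _ (prevTurn_le i j t)
      (prevTurn_mem_turns i (mem_of_mem_erase ht) (hne t ht)))
  · exact add_le_of_mem_turns (mem_of_mem_erase ht) (hne t ht)
  · exact add_le_of_mem_turns (mem_of_mem_erase ht') (hne t' ht')

end RoundRobin

open RoundRobin

theorem round_robin_EF1_general (n m : ℕ)
    (v : Fin n → Fin m → ℝ) (hv : ∀ i g, 0 ≤ v i g)
    (pick : Fin m → Fin m) (hpick : Function.Bijective pick)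
    (agent : Fin m → Fin n) (hagent : ∀ t : Fin m, (agent t : ℕ) = (t : ℕ) % n)
    (greedy : ∀ t t' : Fin m, t ≤ t' → v (agent t) (pick t') ≤ v (agent t) (pick t))
    (A : Fin n → Finset (Fin m))
    (hA : ∀ i : Fin n,
      A i = (Finset.univ.filter (fun t : Fin m => (t : ℕ) % n = (i : ℕ))).image pick) :
    ∀ i j : Fin n, (A j).Nonempty →
      ∃ g ∈ A j, ∑ x ∈ (A j).erase g, v i x ≤ ∑ x ∈ A i, v i x := by
  have hA' : ∀ k, A k = (turns n k).image pick := hA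
  intro i j ⟨g, hg⟩
  obtain ⟨t, ht, -⟩ := mem_image.1 (hA' j ▸ hg)
  have hj : (j : ℕ) < m := (mem_turns.1 ht ▸ Nat.mod_le _ _).trans_lt t.2
  let t₀ : Fin m := ⟨j, hj⟩
  have ht₀ : t₀ ∈ turns n j := mem_turns.2 (Nat.mod_eq_of_lt j.2)
  refine ⟨pick t₀, hA' j ▸ mem_image_of_mem pick ht₀, ?_⟩
  rw [hA', hA', ← image_erase hpick.1, sum_image hpick.1.injOn, sum_image hpick.1.injOn]
  refine sum_erase_first_turn_le (fun t ↦ v i (pick t)) (fun t ↦ hv i _)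
    (fun t t' htt' ht ↦ ?_) rfl
  have hagent_t : agent t = i := Fin.ext ((hagent t).trans (mem_turns.1 ht))
  simpa only [hagent_t] using greedy t t' htt'

/-- The classic round-robin mechanism with additive valuations produces
an EF1 allocation. Steps `t : Fin m` are taken in increasing order; the agent acting
at step `t` is `t % n`, and it picks the good `pick t`. The greedy hypothesis says
the agent acting at step `t` values the good it picks at least as much as every good
still remaining (i.e. picked at a later step). -/
theorem round_robin_EF1 (n m : ℕ) (hn : 0 < n)
    (v : Fin n → Fin m → ℝ) (hv : ∀ i g, 0 ≤ v i g)
    (pick : Fin m → Fin m) (hpick : Function.Bijective pick)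
    (agent : Fin m → Fin n) (hagent : ∀ t : Fin m, (agent t : ℕ) = (t : ℕ) % n)
    (greedy : ∀ t t' : Fin m, t ≤ t' → v (agent t) (pick t') ≤ v (agent t) (pick t))
    (A : Fin n → Finset (Fin m))
    (hA : ∀ i : Fin n,
      A i = (Finset.univ.filter (fun t : Fin m => (t : ℕ) % n = (i : ℕ))).image pick) :
    ∀ i j : Fin n, (A j).Nonempty →
      ∃ g ∈ A j, ∑ x ∈ (A j).erase g, v i x ≤ ∑ x ∈ A i, v i x :=
  round_robin_EF1_general n m v hv pick hpick agent hagent greedy A hA
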